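/- For the k-uniform matroid on n ≥ k ≥ 1 elements with rank function f(S) = min(|S|,k), the correlation gap equals k/Φ(n,k), where Φ(n,k) = E[min(X,k)] for X ~ Binomial(n, k/n). In particular, for any distribution D on subsets of {1,...,n} with marginals q, E over the independent distribution with the same marginals of min(|S|,k) is at least (Φ(n,k)/k)·E_{S~D}[min(|S|,k)]. -/

import Mathlib

/-!
Write `s = ∑ i, marginal D i` for the total marginal mass of `D`. The correlated expectation of
`min(|S|, k)` is at most `min(s, k)`. On the independent side, moving two inclusion probabilities
towards each other with their sum fixed can only lower `E[min(|S|, k)]`, because `min(·, k)` is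
concave; hence the independent expectation is at least `E[min(Bin(n, s/n), k)]`. Binomial thinning
shows that `p ↦ E[min(Bin(n, p), k)]` is nondecreasing and that its value at `λ p` is at least `λ`
times its value at `p` (`λ ≤ 1`); comparing `s/n` with `k/n` gives
`E[min(Bin(n, s/n), k)] ≥ min(s, k) / k · Φ(n, k)`. The uniform distribution on `k`-sets has
marginals `k/n` and attains the ratio `k / Φ(n, k)`.
-/

open Finset

/-- `Phi n k` is the expectation of `min(X, k)` for `X ~ Binomial(n, k/n)`. -/
noncomputable def Phi (n k : ℕ) : ℝ :=
  ∑ t ∈ Finset.range (n + 1),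
    (n.choose t : ℝ) * ((k : ℝ) / n) ^ t * (1 - (k : ℝ) / n) ^ (n - t) * (min t k : ℕ)

/-- Marginal probability of element `i` under distribution `D`. -/
noncomputable def marginal {n : ℕ} (D : Finset (Fin n) → ℝ) (i : Fin n) : ℝ :=
  ∑ S ∈ Finset.univ.filter (fun S : Finset (Fin n) => i ∈ S), D S

/-- Expectation of `f` under independent inclusion with probabilities `q`. -/
noncomputable def indepExp {n : ℕ} (q : Fin n → ℝ) (f : Finset (Fin n) → ℝ) : ℝ :=
  ∑ S : Finset (Fin n), ((∏ i ∈ S, q i) * ∏ i ∈ Sᶜ, (1 - q i)) * f S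

/-- `binomialExp m p h` is the expectation of `h X` for `X ~ Bin(m, p)`. -/
noncomputable def binomialExp (m : ℕ) (p : ℝ) (h : ℕ → ℝ) : ℝ :=
  ∑ t ∈ range (m + 1), (m.choose t : ℝ) * p ^ t * (1 - p) ^ (m - t) * h t

section binomialExp

variable {m : ℕ} {p p' : ℝ} {h h' : ℕ → ℝ}

@[simp]
lemma binomialExp_zero (p : ℝ) (h : ℕ → ℝ) : binomialExp 0 p h = h 0 := by
  simp [binomialExp]

lemma binomialWeight_succ_succ (m t : ℕ) (p : ℝ) :
    ((m + 1).choose (t + 1) : ℝ) * p ^ (t + 1) * (1 - p) ^ (m + 1 - (t + 1)) =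
      p * ((m.choose t : ℝ) * p ^ t * (1 - p) ^ (m - t)) +
        (1 - p) * ((m.choose (t + 1) : ℝ) * p ^ (t + 1) * (1 - p) ^ (m - (t + 1))) := by
  rw [Nat.choose_succ_succ', Nat.add_sub_add_right]
  rcases lt_or_ge m (t + 1) with hmt | htm
  · rw [Nat.choose_eq_zero_of_lt hmt]
    simp only [CharP.cast_eq_zero, add_zero, zero_mul, mul_zero]
    ring
  · obtain ⟨d, rfl⟩ := Nat.exists_eq_add_of_le htm
    rw [show t + 1 + d - t = d + 1 by omega, Nat.add_sub_cancel_left]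
    push_cast
    ring

lemma binomialExp_succ (m : ℕ) (p : ℝ) (h : ℕ → ℝ) :
    binomialExp (m + 1) p h =
      (1 - p) * binomialExp m p h + p * binomialExp m p (fun t => h (t + 1)) := by
  have hshift : binomialExp m p h = (1 - p) ^ m * h 0 +
      ∑ t ∈ range (m + 1), (m.choose (t + 1) : ℝ) * p ^ (t + 1) * (1 - p) ^ (m - (t + 1)) *
        h (t + 1) := by
    rw [binomialExp, ← add_zero (∑ t ∈ range (m + 1), _),
      ← show (m.choose (m + 1) : ℝ) * p ^ (m + 1) * (1 - p) ^ (m - (m + 1)) * h (m + 1) = 0 by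
        simp, ← sum_range_succ, sum_range_succ']
    simp [add_comm]
  rw [binomialExp, sum_range_succ', hshift, binomialExp]
  simp only [binomialWeight_succ_succ, add_mul, sum_add_distrib]
  simp only [mul_assoc, ← mul_sum]
  simp only [Nat.choose_zero_right, pow_zero, Nat.sub_zero, pow_succ]
  ring

lemma binomialExp_add (m : ℕ) (p : ℝ) (h h' : ℕ → ℝ) :
    binomialExp m p (fun t => h t + h' t) = binomialExp m p h + binomialExp m p h' := by
  simp only [binomialExp, mul_add, sum_add_distrib]

lemma binomialExp_const_mul (m : ℕ) (p c : ℝ) (h : ℕ → ℝ) :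
    binomialExp m p (fun t => c * h t) = c * binomialExp m p h := by
  simp only [binomialExp, mul_sum]
  exact sum_congr rfl fun _ _ => by ring

lemma binomialExp_mono (hp₀ : 0 ≤ p) (hp₁ : p ≤ 1) (hle : ∀ t ≤ m, h t ≤ h' t) :
    binomialExp m p h ≤ binomialExp m p h' := by
  refine sum_le_sum fun t ht => mul_le_mul_of_nonneg_left
    (hle t (Nat.lt_succ_iff.mp (mem_range.mp ht))) ?_
  have : 0 ≤ 1 - p := by linarith
  positivity

@[simp]
lemma binomialExp_const (m : ℕ) (p c : ℝ) : binomialExp m p (fun _ => c) = c := by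
  induction m with
  | zero => simp
  | succ m ih => rw [binomialExp_succ, ih]; ring

lemma binomialExp_cast (m : ℕ) (p : ℝ) : binomialExp m p (fun t => (t : ℝ)) = m * p := by
  induction m with
  | zero => simp
  | succ m ih =>
    simp only [binomialExp_succ, Nat.cast_add, Nat.cast_one, binomialExp_add, ih,
      binomialExp_const]
    ring

/-- Binomial thinning: keeping each of `Bin(m, p)` successes with probability `λ` gives
`Bin(m, λ p)`. -/
lemma binomialExp_mul (m : ℕ) (lam p : ℝ) (h : ℕ → ℝ) :
    binomialExp m (lam * p) h = binomialExp m p (fun t => binomialExp t lam h) := by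
  induction m generalizing h with
  | zero => simp
  | succ m ih =>
    simp only [binomialExp_succ, binomialExp_add, binomialExp_const_mul, ih]
    ring

lemma binomialExp_le_of_monotone (hh : Monotone h) (hp₀ : 0 ≤ p) (hpp' : p ≤ p')
    (hp' : p' ≤ 1) : binomialExp m p h ≤ binomialExp m p' h := by
  rcases (hp₀.trans hpp').eq_or_lt with hp'₀ | hp'₀
  · rw [show p = p' by linarith]
  rw [show p = p / p' * p' by field_simp, binomialExp_mul]
  refine binomialExp_mono hp'₀.le hp' fun t _ => ?_
  calc binomialExp t (p / p') h ≤ binomialExp t (p / p') (fun _ => h t) :=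
        binomialExp_mono (by positivity) ((div_le_one hp'₀).mpr hpp') fun u hu => hh hu
    _ = h t := binomialExp_const _ _ _

end binomialExp

section truncated

variable {k m : ℕ} {p lam : ℝ}

lemma monotone_min_cast (k : ℕ) : Monotone fun t : ℕ => ((min t k : ℕ) : ℝ) :=
  fun _ _ hst => by simp only; exact_mod_cast min_le_min_right k hst

lemma min_add_min_add_two_le (k t : ℕ) :
    ((min t k : ℕ) : ℝ) + ((min (t + 2) k : ℕ) : ℝ) ≤
      ((min (t + 1) k : ℕ) : ℝ) + ((min (t + 1) k : ℕ) : ℝ) := by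
  norm_cast; omega

lemma mul_min_le_mul_min {t : ℕ} (htm : t ≤ m) : t * min m k ≤ m * min t k := by
  rcases le_total t k with htk | hkt <;> rcases le_total m k with hmk | hkm <;>
    simp only [min_eq_left, min_eq_right, *] <;> nlinarith

/-- `min(·, k)` is concave and vanishes at `0`, so it lies above its chord `t ↦ t · min(m,k)/m`
on `[0, m]`, whose binomial mean is `λ · min(m,k)`. -/
lemma mul_min_le_binomialExp_min (hlam₀ : 0 ≤ lam) (hlam₁ : lam ≤ 1) :
    lam * ((min m k : ℕ) : ℝ) ≤ binomialExp m lam fun t => ((min t k : ℕ) : ℝ) := by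
  rcases Nat.eq_zero_or_pos m with rfl | hm
  · simp
  have hm' : (0 : ℝ) < m := by exact_mod_cast hm
  refine le_of_mul_le_mul_left ?_ hm'
  calc (m : ℝ) * (lam * ((min m k : ℕ) : ℝ))
      = binomialExp m lam fun t => ((min m k : ℕ) : ℝ) * t := by
        rw [binomialExp_const_mul, binomialExp_cast]; ring
    _ ≤ binomialExp m lam fun t => (m : ℝ) * ((min t k : ℕ) : ℝ) :=
        binomialExp_mono hlam₀ hlam₁ fun t ht => by
          rw [mul_comm]; exact_mod_cast mul_min_le_mul_min ht
    _ = _ := binomialExp_const_mul _ _ _ _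

lemma mul_binomialExp_min_le (hlam₀ : 0 ≤ lam) (hlam₁ : lam ≤ 1) (hp₀ : 0 ≤ p) (hp₁ : p ≤ 1) :
    lam * binomialExp m p (fun t => ((min t k : ℕ) : ℝ)) ≤
      binomialExp m (lam * p) fun t => ((min t k : ℕ) : ℝ) := by
  rw [binomialExp_mul, ← binomialExp_const_mul]
  exact binomialExp_mono hp₀ hp₁ fun t _ => mul_min_le_binomialExp_min hlam₀ hlam₁

end truncated

section Phi

variable {n k : ℕ}

lemma phi_eq_binomialExp : Phi n k = binomialExp n (k / n) fun t => ((min t k : ℕ) : ℝ) := rfl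

lemma div_mem_unitInterval (hkn : k ≤ n) : (k : ℝ) / n ∈ Set.Icc (0 : ℝ) 1 :=
  ⟨by positivity, div_le_one_of_le₀ (by exact_mod_cast hkn) (by positivity)⟩

lemma phi_pos (hk : 1 ≤ k) (hkn : k ≤ n) : 0 < Phi n k := by
  obtain ⟨hp₀, hp₁⟩ := div_mem_unitInterval hkn
  have hlow := mul_min_le_binomialExp_min (m := n) (k := k) hp₀ hp₁
  rw [min_eq_right hkn] at hlow
  have : (0 : ℝ) < k / n * k := by
    have : (0 : ℝ) < k := by exact_mod_cast hk
    have : (0 : ℝ) < n := by exact_mod_cast hk.trans hkn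
    positivity
  exact this.trans_le hlow

lemma min_div_mul_phi_le (hk : 1 ≤ k) (hkn : k ≤ n) {s : ℝ} (hs₀ : 0 ≤ s) (hsn : s ≤ n) :
    min s k / k * Phi n k ≤ binomialExp n (s / n) fun t => ((min t k : ℕ) : ℝ) := by
  have hk₀ : (0 : ℝ) < k := by exact_mod_cast hk
  have hn₀ : (0 : ℝ) < n := by exact_mod_cast hk.trans hkn
  obtain ⟨hp₀, hp₁⟩ := div_mem_unitInterval hkn
  rcases le_total s k with hsk | hks
  · rw [min_eq_left hsk, phi_eq_binomialExp, show s / n = s / k * (k / n) by field_simp]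
    exact mul_binomialExp_min_le (by positivity) ((div_le_one hk₀).mpr hsk) hp₀ hp₁
  · rw [min_eq_right hks, div_self hk₀.ne', one_mul, phi_eq_binomialExp]
    exact binomialExp_le_of_monotone (monotone_min_cast k) hp₀
      (div_le_div_of_nonneg_right hks hn₀.le) ((div_le_one hn₀).mpr hsn)

end Phi

/-- The expectation of `h |S|` for a random `S ⊆ A` containing each `i` independently with
probability `q i`. -/
noncomputable def cardExp {ι : Type*} [DecidableEq ι] (A : Finset ι) (q : ι → ℝ) (h : ℕ → ℝ) :
    ℝ :=
  ∑ S ∈ A.powerset, (∏ i ∈ S, q i) * (∏ i ∈ A \ S, (1 - q i)) * h S.card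

section cardExp

variable {ι : Type*} [DecidableEq ι] {A : Finset ι} {q q' : ι → ℝ} {h h' : ℕ → ℝ} {i j : ι}

@[simp]
lemma cardExp_empty (q : ι → ℝ) (h : ℕ → ℝ) : cardExp ∅ q h = h 0 := by
  simp [cardExp]

lemma cardExp_insert (hi : i ∉ A) (q : ι → ℝ) (h : ℕ → ℝ) :
    cardExp (insert i A) q h =
      (1 - q i) * cardExp A q h + q i * cardExp A q (fun t => h (t + 1)) := by
  rw [cardExp, sum_powerset_insert hi, cardExp, cardExp, mul_sum, mul_sum]
  congr 1 <;> refine sum_congr rfl fun S hS => ?_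
  · have hiS : i ∉ S := fun h => hi (mem_powerset.mp hS h)
    rw [insert_sdiff_of_notMem _ hiS, prod_insert (fun h => hi (mem_sdiff.mp h).1)]
    ring
  · have hiS : i ∉ S := fun h => hi (mem_powerset.mp hS h)
    rw [insert_sdiff_insert, sdiff_insert_of_notMem hi, prod_insert hiS, card_insert_of_notMem hiS]
    ring

lemma cardExp_congr (hq : ∀ l ∈ A, q l = q' l) (h : ℕ → ℝ) : cardExp A q h = cardExp A q' h := by
  refine sum_congr rfl fun S hS => ?_
  rw [prod_congr rfl fun l hl => hq l (mem_powerset.mp hS hl),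
    prod_congr rfl fun l hl => congrArg (1 - ·) (hq l (mem_sdiff.mp hl).1)]

lemma cardExp_add (A : Finset ι) (q : ι → ℝ) (h h' : ℕ → ℝ) :
    cardExp A q (fun t => h t + h' t) = cardExp A q h + cardExp A q h' := by
  simp only [cardExp, mul_add, sum_add_distrib]

lemma cardExp_mono (hq : ∀ l ∈ A, 0 ≤ q l ∧ q l ≤ 1) (hle : ∀ t, h t ≤ h' t) :
    cardExp A q h ≤ cardExp A q h' := by
  refine sum_le_sum fun S hS => mul_le_mul_of_nonneg_left (hle _) (mul_nonneg ?_ ?_)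
  · exact prod_nonneg fun l hl => (hq l (mem_powerset.mp hS hl)).1
  · exact prod_nonneg fun l hl => sub_nonneg.mpr (hq l (mem_sdiff.mp hl).1).2

lemma cardExp_of_forall_eq {p : ℝ} (hq : ∀ l ∈ A, q l = p) (h : ℕ → ℝ) :
    cardExp A q h = binomialExp A.card p h := by
  induction A using Finset.induction_on generalizing h with
  | empty => simp
  | insert i A hi ih =>
    have hqA : ∀ l ∈ A, q l = p := fun l hl => hq l (mem_insert_of_mem hl)
    rw [cardExp_insert hi, card_insert_of_notMem hi, binomialExp_succ, ih hqA, ih hqA,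
      hq i (mem_insert_self i A)]

/-- Moving two coordinates of `q` closer together while keeping their sum decreases the expectation
of a concave function of the cardinality: the expectation is affine in `q i + q j` and in
`q i * q j`, with coefficient `h t - 2 h (t + 1) + h (t + 2) ≤ 0` on the product. -/
lemma cardExp_le_of_pair (hi : i ∈ A) (hj : j ∈ A) (hij : i ≠ j)
    (hq : ∀ l ∈ A, 0 ≤ q l ∧ q l ≤ 1) (hagree : ∀ l ∈ A, l ≠ i → l ≠ j → q' l = q l)
    (hsum : q' i + q' j = q i + q j) (hprod : q i * q j ≤ q' i * q' j)
    (hh : ∀ t, h t + h (t + 2) ≤ h (t + 1) + h (t + 1)) :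
    cardExp A q' h ≤ cardExp A q h := by
  set B := (A.erase i).erase j
  have hjB : j ∉ B := notMem_erase j _
  have hiB : i ∉ insert j B := by simp [B, hij]
  have hA : A = insert i (insert j B) := by
    rw [insert_erase (mem_erase.mpr ⟨hij.symm, hj⟩), insert_erase hi]
  have hBq : ∀ l ∈ B, q' l = q l := fun l hl => by
    obtain ⟨hlj, hli, hlA⟩ : l ≠ j ∧ l ≠ i ∧ l ∈ A := by simpa [B] using hl
    exact hagree l hlA hli hlj
  rw [hA, cardExp_insert hiB, cardExp_insert hiB, cardExp_insert hjB, cardExp_insert hjB,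
    cardExp_insert hjB, cardExp_insert hjB]
  simp only [cardExp_congr hBq]
  set E₀ := cardExp B q h
  set E₁ := cardExp B q fun t => h (t + 1)
  set E₂ := cardExp B q fun t => h (t + 1 + 1)
  have hconc : E₀ + E₂ ≤ E₁ + E₁ := by
    rw [← cardExp_add, ← cardExp_add]
    exact cardExp_mono (fun l hl => hq l (mem_of_mem_erase (mem_of_mem_erase hl))) hh
  have hdiff : (1 - q i) * ((1 - q j) * E₀ + q j * E₁) + q i * ((1 - q j) * E₁ + q j * E₂) -
      ((1 - q' i) * ((1 - q' j) * E₀ + q' j * E₁) + q' i * ((1 - q' j) * E₁ + q' j * E₂)) =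
      (q' i * q' j - q i * q j) * (E₁ + E₁ - (E₀ + E₂)) := by
    linear_combination (E₀ - E₁) * hsum
  linarith [mul_nonneg (sub_nonneg.mpr hprod) (sub_nonneg.mpr hconc)]

end cardExp

section Hoeffding

variable {ι : Type*} [Fintype ι] [DecidableEq ι] {q : ι → ℝ} {h : ℕ → ℝ} {p : ℝ}

/-- Robin Hood step: moving mass `p - q a` from a coordinate `b` above the mean `p` to a coordinate
`a` below it makes `a` equal to the mean and brings the pair closer together. -/
lemma exists_cardExp_le_of_exists_ne (hq : ∀ l, 0 ≤ q l ∧ q l ≤ 1)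
    (hsum : ∑ l, q l = Fintype.card ι * p) (hh : ∀ t, h t + h (t + 2) ≤ h (t + 1) + h (t + 1))
    (hne : ∃ l, q l ≠ p) :
    ∃ q' : ι → ℝ, (∀ l, 0 ≤ q' l ∧ q' l ≤ 1) ∧ ∑ l, q' l = Fintype.card ι * p ∧
      #{l | q' l ≠ p} < #{l | q l ≠ p} ∧ cardExp univ q' h ≤ cardExp univ q h := by
  obtain ⟨l₀, hl₀⟩ := hne
  obtain ⟨b, -, hb⟩ := exists_pos_of_sum_zero_of_exists_nonzero (fun l => q l - p)
    (by simp [sum_sub_distrib, hsum]) ⟨l₀, mem_univ l₀, sub_ne_zero.mpr hl₀⟩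
  obtain ⟨a, -, ha⟩ := exists_pos_of_sum_zero_of_exists_nonzero (fun l => p - q l)
    (by simp [sum_sub_distrib, hsum]) ⟨l₀, mem_univ l₀, sub_ne_zero.mpr (Ne.symm hl₀)⟩
  have hab : a ≠ b := by rintro rfl; linarith
  set q' : ι → ℝ := fun l => q l + (p - q a) * ((if l = a then 1 else 0) - if l = b then 1 else 0)
  have hq'a : q' a = p := by simp [q', hab]
  have hq'b : q' b = q a + q b - p := by simp [q', hab.symm]; ring
  have hq'l : ∀ l, l ≠ a → l ≠ b → q' l = q l := fun l hla hlb => by simp [q', hla, hlb]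
  refine ⟨q', fun l => ?_, ?_, ?_, ?_⟩
  · by_cases hla : l = a
    · subst hla; rw [hq'a]; constructor <;> linarith [hq l, hq b]
    by_cases hlb : l = b
    · subst hlb; rw [hq'b]; constructor <;> linarith [hq l, hq a]
    rw [hq'l l hla hlb]; exact hq l
  · simp [q', sum_add_distrib, ← mul_sum, sum_sub_distrib, hsum]
  · refine card_lt_card ((ssubset_iff_of_subset fun l hl => ?_).mpr ⟨a, ?_, ?_⟩)
    · simp only [mem_filter, mem_univ, true_and] at hl ⊢
      by_cases hlb : l = b
      · subst hlb; linarith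
      · rwa [← hq'l l (by rintro rfl; exact hl hq'a) hlb]
    · simp only [mem_filter, mem_univ, true_and]; linarith
    · simp [hq'a]
  · exact cardExp_le_of_pair (mem_univ a) (mem_univ b) hab (fun l _ => hq l)
      (fun l _ => hq'l l) (by rw [hq'a, hq'b]; ring) (by rw [hq'a, hq'b]; nlinarith) hh

/-- Hoeffding's comparison of a Poisson-binomial with the binomial of the same mean. -/
lemma binomialExp_le_cardExp (hq : ∀ l, 0 ≤ q l ∧ q l ≤ 1)
    (hsum : ∑ l, q l = Fintype.card ι * p) (hh : ∀ t, h t + h (t + 2) ≤ h (t + 1) + h (t + 1)) :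
    binomialExp (Fintype.card ι) p h ≤ cardExp univ q h := by
  induction hN : #{l | q l ≠ p} using Nat.strong_induction_on generalizing q with
  | _ N ih =>
  by_cases hall : ∀ l, q l = p
  · rw [cardExp_of_forall_eq (fun l _ => hall l), card_univ]
  obtain ⟨q', hq', hsum', hlt, hle⟩ :=
    exists_cardExp_le_of_exists_ne hq hsum hh (not_forall.mp hall)
  exact (ih _ (hN ▸ hlt) hq' hsum' rfl).trans hle

end Hoeffding

section Correlated

variable {n k : ℕ} {D : Finset (Fin n) → ℝ}

lemma indepExp_eq_cardExp (q : Fin n → ℝ) (h : ℕ → ℝ) :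
    indepExp q (fun S => h S.card) = cardExp univ q h := by
  simp only [indepExp, cardExp, powerset_univ, compl_eq_univ_sdiff]

lemma marginal_nonneg (hD₀ : ∀ S, 0 ≤ D S) (i : Fin n) : 0 ≤ marginal D i :=
  sum_nonneg fun S _ => hD₀ S

lemma marginal_le_one (hD₀ : ∀ S, 0 ≤ D S) (hD₁ : ∑ S, D S = 1) (i : Fin n) :
    marginal D i ≤ 1 :=
  hD₁ ▸ sum_le_sum_of_subset_of_nonneg (filter_subset _ _) fun S _ _ => hD₀ S

lemma sum_mul_card_eq_sum_marginal (D : Finset (Fin n) → ℝ) :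
    ∑ S, D S * #S = ∑ i, marginal D i := by
  simp only [marginal, sum_filter]
  rw [sum_comm]
  refine sum_congr rfl fun S _ => ?_
  rw [sum_ite_mem, univ_inter, sum_const, nsmul_eq_mul, mul_comm]

lemma sum_mul_min_card_le (hD₀ : ∀ S, 0 ≤ D S) (hD₁ : ∑ S, D S = 1) :
    ∑ S, D S * ((min #S k : ℕ) : ℝ) ≤ min (∑ i, marginal D i) k := by
  refine le_min ?_ ?_
  · rw [← sum_mul_card_eq_sum_marginal]
    exact sum_le_sum fun S _ =>
      mul_le_mul_of_nonneg_left (by exact_mod_cast min_le_left _ _) (hD₀ S)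
  · calc ∑ S, D S * ((min #S k : ℕ) : ℝ) ≤ ∑ S, D S * k :=
          sum_le_sum fun S _ =>
            mul_le_mul_of_nonneg_left (by exact_mod_cast min_le_right _ _) (hD₀ S)
      _ = k := by rw [← sum_mul, hD₁, one_mul]

lemma phi_div_mul_le_indepExp (hk : 1 ≤ k) (hkn : k ≤ n) (hD₀ : ∀ S, 0 ≤ D S)
    (hD₁ : ∑ S, D S = 1) :
    Phi n k / k * ∑ S, D S * ((min #S k : ℕ) : ℝ) ≤
      indepExp (marginal D) fun S => ((min #S k : ℕ) : ℝ) := by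
  set s := ∑ i, marginal D i
  have hq : ∀ i, 0 ≤ marginal D i ∧ marginal D i ≤ 1 :=
    fun i => ⟨marginal_nonneg hD₀ i, marginal_le_one hD₀ hD₁ i⟩
  have hs₀ : 0 ≤ s := sum_nonneg fun i _ => (hq i).1
  have hsn : s ≤ n := (sum_le_sum fun i _ => (hq i).2).trans (by simp)
  have hn₀ : (n : ℝ) ≠ 0 := by have : 0 < n := hk.trans hkn; positivity
  calc Phi n k / k * ∑ S, D S * ((min #S k : ℕ) : ℝ) ≤ Phi n k / k * min s k :=
        mul_le_mul_of_nonneg_left (sum_mul_min_card_le hD₀ hD₁)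
          (div_nonneg (phi_pos hk hkn).le (Nat.cast_nonneg k))
    _ = min s k / k * Phi n k := by ring
    _ ≤ binomialExp n (s / n) fun t => ((min t k : ℕ) : ℝ) := min_div_mul_phi_le hk hkn hs₀ hsn
    _ ≤ cardExp univ (marginal D) fun t => ((min t k : ℕ) : ℝ) := by
      simpa using binomialExp_le_cardExp (p := s / n) hq
        (by rw [Fintype.card_fin, mul_div_cancel₀ _ hn₀]) (min_add_min_add_two_le k)
    _ = _ := (indepExp_eq_cardExp _ _).symm

end Correlated

section Symmetric

variable {n : ℕ} {D : Finset (Fin n) → ℝ}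

lemma marginal_eq_of_perm_invariant
    (hD : ∀ (σ : Equiv.Perm (Fin n)) S, D (S.map σ.toEmbedding) = D S) (i j : Fin n) :
    marginal D i = marginal D j := by
  simp only [marginal, sum_filter]
  refine Fintype.sum_equiv (Equiv.finsetCongr (Equiv.swap i j)) _ _ fun S => ?_
  simp [Equiv.finsetCongr_apply, hD]

lemma marginal_eq_div_of_perm_invariant
    (hD : ∀ (σ : Equiv.Perm (Fin n)) S, D (S.map σ.toEmbedding) = D S) (i : Fin n) :
    marginal D i = (∑ S, D S * #S) / n := by
  rw [sum_mul_card_eq_sum_marginal, sum_congr rfl fun j _ => marginal_eq_of_perm_invariant hD j i,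
    sum_const, card_univ, Fintype.card_fin, nsmul_eq_mul]
  rcases Nat.eq_zero_or_pos n with rfl | hn
  · exact i.elim0
  · field_simp

end Symmetric

noncomputable def uniformOnCard (n k : ℕ) (S : Finset (Fin n)) : ℝ :=
  if #S = k then ((n.choose k : ℕ) : ℝ)⁻¹ else 0

section uniformOnCard

variable {n k : ℕ}

lemma uniformOnCard_nonneg (S : Finset (Fin n)) : 0 ≤ uniformOnCard n k S := by
  unfold uniformOnCard; split_ifs <;> positivity

lemma sum_uniformOnCard (hkn : k ≤ n) : ∑ S, uniformOnCard n k S = 1 := by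
  have : (n.choose k : ℝ) ≠ 0 := by exact_mod_cast (Nat.choose_pos hkn).ne'
  unfold uniformOnCard
  rw [← sum_filter, sum_const, ← powerset_univ, ← powersetCard_eq_filter,
    card_powersetCard, card_univ, Fintype.card_fin, nsmul_eq_mul, mul_inv_cancel₀ this]

lemma sum_uniformOnCard_mul (hkn : k ≤ n) (g : ℕ → ℝ) :
    ∑ S, uniformOnCard n k S * g #S = g k := by
  calc ∑ S, uniformOnCard n k S * g #S = ∑ S, uniformOnCard n k S * g k :=
        sum_congr rfl fun S _ => by unfold uniformOnCard; split_ifs with hS <;> simp [hS]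
    _ = g k := by rw [← sum_mul, sum_uniformOnCard hkn, one_mul]

lemma marginal_uniformOnCard (hkn : k ≤ n) (i : Fin n) :
    marginal (uniformOnCard n k) i = k / n := by
  rw [marginal_eq_div_of_perm_invariant (fun σ S => by simp [uniformOnCard]) i,
    sum_uniformOnCard_mul hkn (fun t => (t : ℝ))]

lemma indepExp_marginal_uniformOnCard (hkn : k ≤ n) :
    indepExp (marginal (uniformOnCard n k)) (fun S => ((min #S k : ℕ) : ℝ)) = Phi n k := by
  rw [indepExp_eq_cardExp _ fun t => ((min t k : ℕ) : ℝ),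
    cardExp_of_forall_eq fun i _ => marginal_uniformOnCard hkn i,
    card_univ, Fintype.card_fin, phi_eq_binomialExp]

end uniformOnCard

/-- The correlation gap of the `k`-uniform rank function `S ↦ min(|S|,k)` is
exactly `k / Φ(n,k)`; in particular the independent expectation with matching
marginals is at least `(Φ(n,k)/k)` times the correlated expectation. -/
theorem correlation_gap_k_uniform (n k : ℕ) (hk : 1 ≤ k) (hkn : k ≤ n) :
    (sSup {x : ℝ | ∃ D : Finset (Fin n) → ℝ,
        (∀ S, 0 ≤ D S) ∧ (∑ S : Finset (Fin n), D S = 1) ∧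
        indepExp (marginal D) (fun S => (min S.card k : ℕ)) ≠ 0 ∧
        x = (∑ S : Finset (Fin n), D S * (min S.card k : ℕ)) /
              indepExp (marginal D) (fun S => (min S.card k : ℕ))}
      = (k : ℝ) / Phi n k) ∧
    (∀ D : Finset (Fin n) → ℝ, (∀ S, 0 ≤ D S) →
      (∑ S : Finset (Fin n), D S = 1) →
      (Phi n k / k) * (∑ S : Finset (Fin n), D S * (min S.card k : ℕ)) ≤
        indepExp (marginal D) (fun S => (min S.card k : ℕ))) := by
  have hphi := phi_pos hk hkn
  have hk₀ : (0 : ℝ) < k := by exact_mod_cast hk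
  refine ⟨IsGreatest.csSup_eq ⟨?_, ?_⟩, fun D hD₀ hD₁ => phi_div_mul_le_indepExp hk hkn hD₀ hD₁⟩
  · refine ⟨uniformOnCard n k, uniformOnCard_nonneg, sum_uniformOnCard hkn, ?_, ?_⟩ <;>
      rw [indepExp_marginal_uniformOnCard hkn]
    · exact hphi.ne'
    · rw [sum_uniformOnCard_mul hkn fun t => ((min t k : ℕ) : ℝ), min_self]
  · rintro x ⟨D, hD₀, hD₁, hne, rfl⟩
    have hmain := phi_div_mul_le_indepExp hk hkn hD₀ hD₁
    have hE : 0 ≤ ∑ S, D S * ((min #S k : ℕ) : ℝ) :=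
      sum_nonneg fun S _ => mul_nonneg (hD₀ S) (Nat.cast_nonneg _)
    have hpos := (mul_nonneg (div_nonneg hphi.le hk₀.le) hE).trans hmain
    rw [div_le_div_iff₀ (hpos.lt_of_ne hne.symm) hphi]
    rw [div_mul_eq_mul_div, div_le_iff₀ hk₀] at hmain
    linarith
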